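/- For any prime p and positive integer k, every faithful action of the dihedral group D_{p^k} of order 2p^k on a finite set has base size at most 2. -/

import Mathlib

/-- A base for the action of `G` on `S`: a set whose pointwise stabilizer is trivial. -/
def IsBase (G : Type*) {S : Type*} [Group G] [MulAction G S] (B : Set S) : Prop :=
  ∀ g : G, (∀ x ∈ B, g • x = x) → g = 1

/-- The base size: minimal cardinality of a base. -/
noncomputable def baseSize (G S : Type*) [Group G] [MulAction G S] : ℕ :=
  sInf {n | ∃ B : Finset S, IsBase G (B : Set S) ∧ B.card = n}

/-!
The rotations of `D_{p^k}` form a cyclic `p`-group, whose nontrivial subgroups all contain the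
rotation `h` of order `p`. A faithful action moves some point `x` by `h`, so the stabilizer of `x`
contains no nontrivial rotation, hence at most one reflection `t`. Adding a point moved by `t`
gives a base of size at most `2`.
-/

section BaseSize

variable {G S : Type*} [Group G] [MulAction G S]

theorem baseSize_le_card {B : Finset S} (hB : IsBase G (B : Set S)) : baseSize G S ≤ B.card :=
  Nat.sInf_le ⟨B, hB, rfl⟩

theorem exists_smul_ne_of_ne_one [FaithfulSMul G S] {g : G} (hg : g ≠ 1) : ∃ x : S, g • x ≠ x := by
  by_contra! h
  exact hg (faithfulSMul_iff.mp ‹_› g h)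

theorem baseSize_le_two_of_stabilizer_subset [FaithfulSMul G S] (x : S) (t : G)
    (hx : (MulAction.stabilizer G x : Set G) ⊆ {1, t}) : baseSize G S ≤ 2 := by
  classical
  obtain ⟨y, hy⟩ : ∃ y : S, t • y = y → t = 1 := by
    by_cases ht : t = 1
    · exact ⟨x, fun _ => ht⟩
    · obtain ⟨y, hy⟩ := exists_smul_ne_of_ne_one (S := S) ht
      exact ⟨y, fun h => absurd h hy⟩
  have hbase : IsBase G (({x, y} : Finset S) : Set S) := by
    intro g hg
    rcases hx (hg x (by simp)) with rfl | rfl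
    · rfl
    · exact hy (hg y (by simp))
  exact (baseSize_le_card hbase).trans Finset.card_le_two

end BaseSize

theorem ZMod.dvd_natCast_prime_pow_pred {p k : ℕ} (hp : p.Prime) {j : ZMod (p ^ k)} (hj : j ≠ 0) :
    j ∣ ((p ^ (k - 1) : ℕ) : ZMod (p ^ k)) := by
  have : NeZero (p ^ k) := ⟨pow_ne_zero k hp.ne_zero⟩
  obtain ⟨a, ha, hd⟩ := (Nat.dvd_prime_pow hp).mp (Nat.gcd_dvd_right j.val (p ^ k))
  have hak : a < k := by
    refine ha.lt_of_ne fun hak => hj ?_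
    have hdvd := Nat.gcd_dvd_left j.val (p ^ k)
    rw [hd, hak] at hdvd
    rw [← ZMod.val_eq_zero]
    exact Nat.eq_zero_of_dvd_of_lt hdvd (ZMod.val_lt j)
  obtain ⟨c, hc⟩ : Nat.gcd j.val (p ^ k) ∣ p ^ (k - 1) := hd ▸ pow_dvd_pow p (by omega)
  -- `j * j⁻¹ = gcd j.val (p ^ k)` by `ZMod.mul_inv_eq_gcd`.
  exact ⟨j⁻¹ * c, by rw [hc, Nat.cast_mul, ← ZMod.mul_inv_eq_gcd, mul_assoc]⟩

namespace DihedralGroup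

variable {n : ℕ}

theorem r_mem_of_dvd {H : Subgroup (DihedralGroup n)} {i j : ZMod n} (hji : j ∣ i)
    (hj : r j ∈ H) : r i ∈ H := by
  obtain ⟨c, rfl⟩ := hji
  rw [← ZMod.intCast_zmod_cast c, ← r_zpow]
  exact H.zpow_mem hj _

theorem exists_subset_pair_of_r_mem (H : Subgroup (DihedralGroup n))
    (hH : ∀ j, r j ∈ H → j = 0) : ∃ t, (H : Set (DihedralGroup n)) ⊆ {1, t} := by
  have hr : ∀ j, r j ∈ H → r j = 1 := fun j hj => by rw [hH j hj, r_zero]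
  by_cases hs : ∃ i, sr i ∈ H
  · obtain ⟨i, hi⟩ := hs
    refine ⟨sr i, fun g hg => ?_⟩
    cases g with
    | r j => exact .inl (hr j hg)
    | sr i' =>
      have hii' : r (i - i') ∈ H := sr_mul_sr i' i ▸ H.mul_mem hg hi
      exact .inr (by rw [sub_eq_zero.mp (hH _ hii')]; rfl)
  · push Not at hs
    refine ⟨1, fun g hg => ?_⟩
    cases g with
    | r j => exact .inl (hr j hg)
    | sr i => exact absurd hg (hs i)

end DihedralGroup

open DihedralGroup in
theorem stmt8_general (S : Type*) (p k : ℕ) (hp : p.Prime) (hk : 1 ≤ k)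
    [MulAction (DihedralGroup (p ^ k)) S] [FaithfulSMul (DihedralGroup (p ^ k)) S] :
    baseSize (DihedralGroup (p ^ k)) S ≤ 2 := by
  have hpk : ((p ^ (k - 1) : ℕ) : ZMod (p ^ k)) ≠ 0 := by
    rw [Ne, ZMod.natCast_eq_zero_iff]
    exact Nat.pow_dvd_pow_iff_le_right hp.one_lt |>.not.mpr (by omega)
  obtain ⟨x, hx⟩ := exists_smul_ne_of_ne_one (S := S)
    (show r ((p ^ (k - 1) : ℕ) : ZMod (p ^ k)) ≠ 1 from fun h => hpk (r.inj h))
  have hrot : ∀ j, r j ∈ MulAction.stabilizer _ x → j = 0 := fun j hj => by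
    by_contra hj0
    exact hx <| r_mem_of_dvd (ZMod.dvd_natCast_prime_pow_pred hp hj0) hj
  obtain ⟨t, ht⟩ := exists_subset_pair_of_r_mem _ hrot
  exact baseSize_le_two_of_stabilizer_subset x t ht

/-- For a prime `p` and `k ≥ 1`, every faithful action of the dihedral group of order
`2 p ^ k` on a finite set has base size at most `2`. -/
theorem stmt8 (S : Type*) [Fintype S] (p k : ℕ) (hp : p.Prime) (hk : 1 ≤ k)
    [MulAction (DihedralGroup (p ^ k)) S] [FaithfulSMul (DihedralGroup (p ^ k)) S] :
    baseSize (DihedralGroup (p ^ k)) S ≤ 2 :=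
  stmt8_general S p k hp hk
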